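/- arXiv:2305.00841 — 5 statements merged into one kernel-verified Lean document; each statement's English description precedes it below -/
import Mathlib

section
/- Let k be a field and let R and S be commutative rings graded by the natural numbers with degree-zero components R_0 = S_0 = k. Write R_+ for the ideal of elements of positive degree in R and S_+ for the ideal of elements of positive degree in S. Let φ : R → S be a graded k-algebra homomorphism and regard S as an R-module via φ; let I be the ideal of S generated by φ(R_+). If S is finitely generated as a k-algebra and S_+ equals the radical of I, then S is finitely generated as an R-module. -/
/-- **Graded Nakayama-type finiteness.**
Let `k` be a field and `R`, `S` commutative rings graded by `ℕ` with `R₀ = S₀ = k`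
(encoded: the degree-zero component is the `k`-span of `1`).  Let `φ : R → S` be a graded
`k`-algebra homomorphism, and let `I` be the ideal of `S` generated by the image under `φ`
of the irrelevant ideal `R₊`.  If `S` is finitely generated as a `k`-algebra and the
irrelevant ideal `S₊` equals the radical of `I`, then `S` is a finite `R`-module
(via `φ`). -/
theorem stmt0 (k R S : Type*) [Field k] [CommRing R] [CommRing S]
    [Algebra k R] [Algebra k S]
    (ℛ : ℕ → Submodule k R) (𝒮 : ℕ → Submodule k S)
    [GradedAlgebra ℛ] [GradedAlgebra 𝒮]
    (hR0 : ℛ 0 = (1 : Submodule k R)) (hS0 : 𝒮 0 = (1 : Submodule k S))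
    (φ : R →ₐ[k] S)
    (hgraded : ∀ n : ℕ, ∀ x ∈ ℛ n, φ x ∈ 𝒮 n)
    (hfg : Algebra.FiniteType k S)
    (hrad : (HomogeneousIdeal.irrelevant 𝒮).toIdeal =
      (Ideal.map (φ : R →+* S) (HomogeneousIdeal.irrelevant ℛ).toIdeal).radical) :
    RingHom.Finite (φ : R →+* S) := by
  classical
  letI : Algebra R S := (φ : R →+* S).toAlgebra
  haveI : IsScalarTower k R S := IsScalarTower.of_algebraMap_eq fun c => (φ.commutes c).symm
  set Sp : Ideal S := (HomogeneousIdeal.irrelevant 𝒮).toIdeal with hSp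
  set Rp : Ideal R := (HomogeneousIdeal.irrelevant ℛ).toIdeal with hRp
  set I : Ideal S := Ideal.map (φ : R →+* S) Rp with hI
  -- the projections as k-linear maps
  let π : ℕ → S →ₗ[k] S := fun n =>
    { toFun := fun x => (DirectSum.decompose 𝒮 x n : S)
      map_add' := by intro a b; simp
      map_smul' := by intro c a; simp [DirectSum.decompose_smul, DirectSum.smul_apply] }
  have hπ : ∀ (n : ℕ) (z : S), π n z = (DirectSum.decompose 𝒮 z n : S) := fun _ _ => rfl
  -- Noetherianity and the power bound
  haveI : IsNoetherianRing S := by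
    haveI : Algebra.FiniteType k S := hfg
    exact Algebra.FiniteType.isNoetherianRing k S
  obtain ⟨N, hN⟩ : ∃ N : ℕ, Sp ^ N ≤ I :=
    Ideal.exists_pow_le_of_le_radical_of_fg (le_of_eq hrad) (IsNoetherian.noetherian Sp)
  -- homogeneous generators of positive degree
  obtain ⟨s, hs⟩ := hfg.out
  let d : S → ℕ := fun g => if h : ∃ n, n ≠ 0 ∧ g ∈ 𝒮 n then h.choose else 0
  let G₀ : Finset S := (s.biUnion fun x =>
      (DirectSum.decompose 𝒮 x).support.image fun n => ((DirectSum.decompose 𝒮 x) n : S)).filter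
      fun g => g ∉ 𝒮 0
  have hG₀deg : ∀ g ∈ G₀, d g ≠ 0 ∧ g ∈ 𝒮 (d g) := by
    intro g hg
    rw [Finset.mem_filter, Finset.mem_biUnion] at hg
    obtain ⟨⟨x, hx, hgx⟩, hg0⟩ := hg
    rw [Finset.mem_image] at hgx
    obtain ⟨n, hn, rfl⟩ := hgx
    have hmem : ((DirectSum.decompose 𝒮 x) n : S) ∈ 𝒮 n := SetLike.coe_mem _
    have hne : n ≠ 0 := by rintro rfl; exact hg0 hmem
    have hex : ∃ m, m ≠ 0 ∧ ((DirectSum.decompose 𝒮 x) n : S) ∈ 𝒮 m := ⟨n, hne, hmem⟩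
    have := hex.choose_spec
    simpa only [d, dif_pos hex] using this
  have hadj : Algebra.adjoin k (↑G₀ : Set S) = ⊤ := by
    rw [eq_top_iff, ← hs]
    apply Algebra.adjoin_le
    intro x hx
    rw [← DirectSum.sum_support_decompose 𝒮 x]
    apply Subalgebra.sum_mem
    intro n hn
    by_cases hg0 : ((DirectSum.decompose 𝒮 x) n : S) ∈ 𝒮 0
    · rw [hS0, Submodule.mem_one] at hg0
      obtain ⟨c, hc⟩ := hg0
      rw [← hc]
      exact Subalgebra.algebraMap_mem _ c
    · refine Algebra.subset_adjoin ?_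
      simp only [G₀, Finset.coe_filter, Set.mem_setOf_eq]
      exact ⟨Finset.mem_biUnion.2 ⟨x, hx, Finset.mem_image.2 ⟨n, hn, rfl⟩⟩, hg0⟩
  -- degree bounds
  set D : ℕ := max (G₀.sup d) 1 with hD
  have hD1 : 1 ≤ D := le_max_right _ _
  have hDle : ∀ g ∈ G₀, d g ≤ D := fun g hg => le_trans (Finset.le_sup hg) (le_max_left _ _)
  set M : ℕ := N * D with hM
  -- closure elements are homogeneous
  have hclos : ∀ w ∈ Submonoid.closure (↑G₀ : Set S), ∃ n, w ∈ 𝒮 n := by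
    intro w hw
    induction hw using Submonoid.closure_induction with
    | mem g hg => exact ⟨d g, (hG₀deg g hg).2⟩
    | one => exact ⟨0, SetLike.one_mem_graded 𝒮⟩
    | mul a b _ _ ha hb =>
      obtain ⟨p, hp⟩ := ha; obtain ⟨q, hq⟩ := hb
      exact ⟨p + q, SetLike.mul_mem_graded hp hq⟩
  -- list products are homogeneous of the expected degree
  have hlistdeg : ∀ l : List S, (∀ g ∈ l, g ∈ G₀) → l.prod ∈ 𝒮 ((l.map d).sum) := by
    intro l
    induction l with
    | nil => intro _; simpa using SetLike.one_mem_graded 𝒮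
    | cons a t ih =>
      intro h
      simp only [List.prod_cons, List.map_cons, List.sum_cons]
      exact SetLike.mul_mem_graded ((hG₀deg a (h a List.mem_cons_self)).2)
        (ih fun g hg => h g (List.mem_cons_of_mem a hg))
  -- the generating set
  set T : Set S := (fun l : List {x : S // x ∈ G₀} => (l.map Subtype.val).prod) ''
    {l | l.length < M} with hT
  have hTfin : T.Finite := Set.Finite.image _ (List.finite_length_lt _ M)
  have hmemT : ∀ l : List S, (∀ g ∈ l, g ∈ G₀) → l.length < M → l.prod ∈ T := by
    intro l hl hlen
    refine ⟨l.pmap Subtype.mk hl, by simpa using hlen, ?_⟩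
    simp [List.map_pmap]
  set P : Submodule R S := Submodule.span R T with hP
  -- key span fact through the projection
  have hspanm : ∀ (x : S) (m : ℕ), x ∈ 𝒮 m →
      x ∈ Submodule.span k ((↑(Submonoid.closure (↑G₀ : Set S)) : Set S) ∩ (𝒮 m : Set S)) := by
    intro x m hx
    have hxtop : x ∈ Submodule.span k (↑(Submonoid.closure (↑G₀ : Set S)) : Set S) := by
      rw [← Algebra.adjoin_eq_span, hadj]
      exact trivial
    have h1 : π m x ∈ Submodule.map (π m) (Submodule.span k
        (↑(Submonoid.closure (↑G₀ : Set S)) : Set S)) := Submodule.mem_map_of_mem hxtop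
    rw [Submodule.map_span] at h1
    have hx' : π m x = x := DirectSum.decompose_of_mem_same 𝒮 hx
    rw [hx'] at h1
    have hsub : π m '' (↑(Submonoid.closure (↑G₀ : Set S)) : Set S) ⊆
        insert 0 ((↑(Submonoid.closure (↑G₀ : Set S)) : Set S) ∩ (𝒮 m : Set S)) := by
      rintro _ ⟨w, hw, rfl⟩
      obtain ⟨n, hn⟩ := hclos w hw
      by_cases h : n = m
      · subst h
        right
        rw [hπ, DirectSum.decompose_of_mem_same 𝒮 hn]
        exact ⟨hw, hn⟩
      · left
        rw [hπ, DirectSum.decompose_of_mem_ne 𝒮 hn h]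
    have := Submodule.span_mono hsub h1
    rwa [Submodule.span_insert_zero] at this
  -- list product in a power of an ideal
  have hpow : ∀ (l : List S) (J : Ideal S), (∀ y ∈ l, y ∈ J) → l.prod ∈ J ^ l.length := by
    intro l J
    induction l with
    | nil => intro _; simp [Ideal.one_eq_top]
    | cons a t ih =>
      intro h
      simp only [List.prod_cons, List.length_cons]
      rw [pow_succ, mul_comm (J ^ t.length) J]
      exact Ideal.mul_mem_mul (h a List.mem_cons_self)
        (ih fun g hg => h g (List.mem_cons_of_mem a hg))
  -- main induction
  have main : ∀ m : ℕ, ∀ x ∈ 𝒮 m, x ∈ P := by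
    intro m
    induction m using Nat.strong_induction_on with
    | _ m ih =>
      intro x hx
      have hx' := hspanm x m hx
      by_cases hm : m < M
      · -- low degree: already a k-combination of monomials in T
        have hsub : (↑(Submonoid.closure (↑G₀ : Set S)) : Set S) ∩ (𝒮 m : Set S) ⊆
            ↑(P.restrictScalars k) := by
          rintro w ⟨hw, hwm⟩
          obtain ⟨l, hlmem, rfl⟩ := Submonoid.exists_list_of_mem_closure hw
          rcases eq_or_ne l.prod 0 with h0 | h0
          · rw [h0]; exact Submodule.zero_mem _
          · have hdeg : (l.map d).sum = m :=
              DirectSum.degree_eq_of_mem_mem 𝒮 (hlistdeg l hlmem) hwm h0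
            have hlen : l.length ≤ m := by
              rw [← hdeg]
              have h1 := List.card_nsmul_le_sum (l.map d) 1 (fun x hx => by
                obtain ⟨g, hg, rfl⟩ := List.mem_map.1 hx
                exact Nat.one_le_iff_ne_zero.2 (hG₀deg g (hlmem g hg)).1)
              simpa [smul_eq_mul] using h1
            exact Submodule.subset_span (hmemT l hlmem (lt_of_le_of_lt hlen hm))
        exact Submodule.span_le.2 hsub hx'
      · -- high degree: x lies in I, use decomposition of products
        push_neg at hm
        have hxSpN : x ∈ Sp ^ N := by
          have hsub : (↑(Submonoid.closure (↑G₀ : Set S)) : Set S) ∩ (𝒮 m : Set S) ⊆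
              ↑((Sp ^ N).restrictScalars k) := by
            rintro w ⟨hw, hwm⟩
            obtain ⟨l, hlmem, rfl⟩ := Submonoid.exists_list_of_mem_closure hw
            rcases eq_or_ne l.prod 0 with h0 | h0
            · rw [h0]; exact Submodule.zero_mem _
            · have hdeg : (l.map d).sum = m :=
                DirectSum.degree_eq_of_mem_mem 𝒮 (hlistdeg l hlmem) hwm h0
              have hsumle : (l.map d).sum ≤ l.length * D := by
                have := List.sum_le_card_nsmul (l.map d) D
                  (fun x hx => by
                    obtain ⟨g, hg, rfl⟩ := List.mem_map.1 hx
                    exact hDle g (hlmem g hg))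
                simpa [smul_eq_mul] using this
              have hNlen : N ≤ l.length := by
                have h1 : N * D ≤ l.length * D := le_trans (hM ▸ hm) (hdeg ▸ hsumle)
                exact Nat.le_of_mul_le_mul_right h1 (lt_of_lt_of_le Nat.zero_lt_one hD1)
              have hmemSp : ∀ g ∈ l, g ∈ Sp := by
                intro g hg
                have hd := hG₀deg g (hlmem g hg)
                show g ∈ (HomogeneousIdeal.irrelevant 𝒮).toIdeal
                rw [HomogeneousIdeal.toIdeal_irrelevant, RingHom.mem_ker,
                  GradedRing.projZeroRingHom_apply]
                exact DirectSum.decompose_of_mem_ne 𝒮 hd.2 hd.1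
              exact SetLike.le_def.1 (Ideal.pow_le_pow_right hNlen) (hpow l Sp hmemSp)
          exact Submodule.span_le.2 hsub hx'
        have hxI : x ∈ Ideal.span ((φ : R →+* S) '' (Rp : Set R)) := hN hxSpN
        obtain ⟨c, hcsupp, hcsum⟩ := Submodule.mem_span_set.1 hxI
        -- per-term analysis
        have key : ∀ (a : S) (r : R), r ∈ Rp → π m (a * φ r) ∈ P := by
          intro a r hr
          have expand : a * φ r =
              ∑ p ∈ (DirectSum.decompose 𝒮 a).support,
                ∑ q ∈ (DirectSum.decompose ℛ r).support,
                  ((DirectSum.decompose 𝒮 a p : S) * φ (DirectSum.decompose ℛ r q : R)) := by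
            conv_lhs => rw [← DirectSum.sum_support_decompose 𝒮 a,
              ← DirectSum.sum_support_decompose ℛ r]
            rw [map_sum, Finset.sum_mul_sum]
          rw [expand, map_sum]
          refine Submodule.sum_mem _ fun p _ => ?_
          rw [map_sum]
          refine Submodule.sum_mem _ fun q _ => ?_
          have hmem : (DirectSum.decompose 𝒮 a p : S) * φ (DirectSum.decompose ℛ r q : R) ∈
              𝒮 (p + q) :=
            SetLike.mul_mem_graded (SetLike.coe_mem _) (hgraded q _ (SetLike.coe_mem _))
          by_cases hpq : p + q = m
          · rw [hπ, DirectSum.decompose_of_mem_same 𝒮 (hpq ▸ hmem)]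
            by_cases hq : q = 0
            · have hr0 : (DirectSum.decompose ℛ r 0 : R) = 0 := hr
              subst hq
              rw [hr0]
              simp
            · have hplt : p < m := by omega
              have h1 : (DirectSum.decompose 𝒮 a p : S) ∈ P := ih p hplt _ (SetLike.coe_mem _)
              have h2 : (DirectSum.decompose 𝒮 a p : S) * φ (DirectSum.decompose ℛ r q : R) =
                  (DirectSum.decompose ℛ r q : R) • (DirectSum.decompose 𝒮 a p : S) := by
                rw [Algebra.smul_def, RingHom.algebraMap_toAlgebra, mul_comm]
                rfl
              rw [h2]
              exact Submodule.smul_mem P _ h1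
          · rw [hπ, DirectSum.decompose_of_mem_ne 𝒮 hmem hpq]
            exact Submodule.zero_mem _
        have hx0 : x = π m x := (DirectSum.decompose_of_mem_same 𝒮 hx).symm
        rw [hx0, ← hcsum, Finsupp.sum, map_sum]
        refine Submodule.sum_mem _ fun y hy => ?_
        obtain ⟨r, hrmem, rfl⟩ := hcsupp hy
        rw [smul_eq_mul]
        exact key (c ((φ : R →+* S) r)) r hrmem
  -- conclude
  have htop : Submodule.span R T = ⊤ := by
    rw [eq_top_iff]
    intro x _
    rw [← DirectSum.sum_support_decompose 𝒮 x]
    exact Submodule.sum_mem _ fun n _ => main n _ (SetLike.coe_mem _)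
  exact ⟨⟨hTfin.toFinset, by rwa [Set.Finite.coe_toFinset]⟩⟩
end

section
/- Let k be a field of characteristic 0 and V a finite-dimensional k-vector space. Let x, y ∈ gl(V) with y semisimple and y ≠ 0, and suppose [x, y] = a • y for some scalar a ∈ k. Then a = 0. -/
/-- Let `k` be a field of characteristic `0` and `V` a finite-dimensional `k`-vector space.
If `x, y ∈ gl(V)` with `y` semisimple and nonzero, and `[x, y] = a • y` for a scalar `a`,
then `a = 0`. -/
theorem stmt1 (k V : Type*) [Field k] [CharZero k] [AddCommGroup V] [Module k V]
    [FiniteDimensional k V] (x y : Module.End k V) (hy : y.IsSemisimple) (hy0 : y ≠ 0)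
    (a : k) (h : ⁅x, y⁆ = a • y) : a = 0 := by
  by_contra ha
  -- `y` is not nilpotent, so all powers `y ^ t` are nonzero.
  have hpow : ∀ t : ℕ, y ^ t ≠ 0 := by
    intro t ht
    exact hy0 (Module.End.eq_zero_of_isNilpotent_isSemisimple ⟨t, ht⟩ hy)
  -- key identity : ⁅x, y ^ t⁆ = (t • a) • y ^ t
  have key : ∀ t : ℕ, ⁅x, y ^ t⁆ = ((t : k) * a) • y ^ t := by
    intro t
    induction t with
    | zero => simp [Ring.lie_def]
    | succ n ih =>
      have h' : x * y - y * x = a • y := h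
      have ih' : x * y ^ n - y ^ n * x = ((n : k) * a) • y ^ n := ih
      show x * y ^ (n + 1) - y ^ (n + 1) * x = _
      have : x * y ^ (n + 1) - y ^ (n + 1) * x
          = (x * y - y * x) * y ^ n + y * (x * y ^ n - y ^ n * x) := by
        simp only [pow_succ']; noncomm_ring
      rw [this, h', ih', Nat.cast_add, Nat.cast_one]
      rw [smul_mul_assoc, mul_smul_comm, ← pow_succ', ← add_smul]
      congr 1; ring
  -- hence `ad x` has infinitely many eigenvalues, contradiction
  letI : LieRing (Module.End k V) := LieRing.ofAssociativeRing
  let D := LieAlgebra.ad k (Module.End k V) x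
  have hev : ∀ t : ℕ, D.HasEigenvalue ((t : k) * a) := fun t =>
    Module.End.hasEigenvalue_of_hasEigenvector
      ⟨by rw [Module.End.mem_eigenspace_iff]; exact key t, hpow t⟩
  have hfin := D.finite_hasEigenvalue
  have hinj : Function.Injective (fun t : ℕ => (t : k) * a) := by
    intro s t hst
    simpa [ha] using hst
  exact Set.infinite_of_injective_forall_mem (f := fun t : ℕ => (t : k) * a) hinj hev hfin
end

section
/- Let k be an algebraically closed field of characteristic 0 and V a finite-dimensional k-vector space. Let 𝔥 be a Lie subalgebra of gl(V) all of whose elements are semisimple endomorphisms, and let x ∈ gl(V) be a semisimple endomorphism with [x, 𝔥] ⊆ 𝔥. Then x centralises 𝔥, i.e., [x, h] = 0 for every h ∈ 𝔥. -/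
open Polynomial Module

/-- `aeval` of right multiplication is right multiplication by `aeval`. -/
lemma aux_aeval_mulRight {k A : Type*} [CommRing k] [Ring A] [Algebra k A]
    (x : A) (p : k[X]) :
    Polynomial.aeval (LinearMap.mulRight k x) p = LinearMap.mulRight k (Polynomial.aeval x p) := by
  induction p using Polynomial.induction_on' with
  | add p q hp hq =>
    rw [map_add, map_add, hp, hq]
    ext a
    simp [mul_add]
  | monomial n c =>
    rw [Polynomial.aeval_monomial, Polynomial.aeval_monomial, LinearMap.pow_mulRight]
    ext a
    simp only [Module.End.mul_apply, LinearMap.smul_apply, LinearMap.mulRight_apply,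
      Module.algebraMap_end_apply, Algebra.smul_def]
    rw [← mul_assoc, ← mul_assoc, Algebra.commutes]

/-- A semisimple endomorphism over an algebraically closed field is diagonalisable. -/
lemma aux_iSup_eigenspace_eq_top {k V : Type*} [Field k] [IsAlgClosed k]
    [AddCommGroup V] [Module k V] [FiniteDimensional k V]
    {f : Module.End k V} (hf : f.IsSemisimple) :
    ⨆ μ, f.eigenspace μ = ⊤ := by
  have h := f.iSup_maxGenEigenspace_eq_top
  simpa only [hf.isFinitelySemisimple.maxGenEigenspace_eq_eigenspace] using h

/-- If `x` is diagonalisable and `[x, h] = μ • h` with `μ ≠ 0`, then `h` is nilpotent. -/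
lemma aux_isNilpotent {k V : Type*} [Field k] [CharZero k]
    [AddCommGroup V] [Module k V] [FiniteDimensional k V]
    {x h : Module.End k V} (htop : ⨆ ν, x.eigenspace ν = ⊤) {μ : k} (hμ : μ ≠ 0)
    (hb : x * h - h * x = μ • h) : IsNilpotent h := by
  have key : ∀ (ν : k) (v : V), v ∈ x.eigenspace ν → h v ∈ x.eigenspace (ν + μ) := by
    intro ν v hv
    rw [Module.End.mem_eigenspace_iff] at hv ⊢
    have h1 := LinearMap.congr_fun hb v
    simp only [LinearMap.sub_apply, LinearMap.smul_apply, Module.End.mul_apply] at h1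
    rw [hv, map_smul, sub_eq_iff_eq_add] at h1
    rw [h1]
    module
  have key2 : ∀ (m : ℕ) (ν : k) (v : V), v ∈ x.eigenspace ν →
      (h ^ m) v ∈ x.eigenspace (ν + (m : k) * μ) := by
    intro m
    induction m with
    | zero => intro ν v hv; simpa using hv
    | succ m ih =>
      intro ν v hv
      have h2 := key _ _ (ih ν v hv)
      have h3 : ν + ((m + 1 : ℕ) : k) * μ = ν + (m : k) * μ + μ := by push_cast; ring
      rw [pow_succ', Module.End.mul_apply, h3]
      exact h2
  obtain ⟨hfin⟩ : Nonempty (Set.Finite (setOf x.HasEigenvalue)) := ⟨x.finite_hasEigenvalue⟩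
  set n := hfin.toFinset.card with hn
  refine ⟨n + 1, ?_⟩
  have claim : ∀ (ν : k) (v : V), v ∈ x.eigenspace ν → (h ^ (n + 1)) v = 0 := by
    intro ν v hv
    by_contra hne
    have hne' : ∀ i, i ≤ n + 1 → (h ^ i) v ≠ 0 := by
      intro i hi hzero
      apply hne
      rw [show n + 1 = (n + 1 - i) + i from (Nat.sub_add_cancel hi).symm, pow_add,
        Module.End.mul_apply, hzero, map_zero]
    have hval : ∀ i : Fin (n + 1), x.HasEigenvalue (ν + (i : ℕ) * μ) := by
      intro i
      rw [Module.End.hasEigenvalue_iff, Submodule.ne_bot_iff]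
      exact ⟨(h ^ (i : ℕ)) v, key2 (i : ℕ) ν v hv, hne' _ (le_of_lt i.isLt)⟩
    let g : Fin (n + 1) → hfin.toFinset := fun i =>
      ⟨ν + (i : ℕ) * μ, (Set.Finite.mem_toFinset hfin).mpr (hval i)⟩
    have hginj : Function.Injective g := by
      intro i j hij
      have : ν + ((i : ℕ) : k) * μ = ν + ((j : ℕ) : k) * μ := by
        simpa [g, Subtype.ext_iff] using hij
      rw [add_right_inj] at this
      exact Fin.ext (Nat.cast_injective (mul_right_cancel₀ hμ this))
    have hcard := Fintype.card_le_of_injective g hginj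
    simp only [Fintype.card_fin, Fintype.card_coe] at hcard
    omega
  have hker : (⊤ : Submodule k V) ≤ LinearMap.ker (h ^ (n + 1)) := by
    rw [← htop]
    exact iSup_le fun ν v hv => LinearMap.mem_ker.mpr (claim ν v hv)
  exact LinearMap.ker_eq_top.mp (top_unique hker)

attribute [local instance 100] LieRing.ofAssociativeRing

/-- Let `k` be an algebraically closed field of characteristic `0` and `V` a
finite-dimensional `k`-vector space.  If `𝔥` is a Lie subalgebra of `gl(V)` all of whose
elements are semisimple, and `x ∈ gl(V)` is semisimple with `[x, 𝔥] ⊆ 𝔥`, then `x`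
centralises `𝔥`. -/
theorem stmt2 (k V : Type*) [Field k] [IsAlgClosed k] [CharZero k]
    [AddCommGroup V] [Module k V] [FiniteDimensional k V]
    (𝔥 : LieSubalgebra k (Module.End k V))
    (hss : ∀ h ∈ 𝔥, Module.End.IsSemisimple h)
    (x : Module.End k V) (hx : x.IsSemisimple)
    (hnorm : ∀ h ∈ 𝔥, ⁅x, h⁆ ∈ 𝔥) :
    ∀ h ∈ 𝔥, ⁅x, h⁆ = 0 := by
  set A : Module.End k (Module.End k V) :=
    LinearMap.mulLeft k x - LinearMap.mulRight k x with hA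
  have hAapp : ∀ h : Module.End k V, A h = ⁅x, h⁆ := by
    intro h
    simp [hA, Ring.lie_def, LinearMap.sub_apply, LinearMap.mulLeft_apply,
      LinearMap.mulRight_apply]
  have hAss : A.IsSemisimple := by
    have h1 : Module.End.IsSemisimple
        (LinearMap.mulLeft k x : Module.End k (Module.End k V)) := by
      apply Module.End.isSemisimple_of_squarefree_aeval_eq_zero hx.minpoly_squarefree
      have he : LinearMap.mulLeft k x = Algebra.lmul k (Module.End k V) x := rfl
      rw [he, Polynomial.aeval_algHom_apply, minpoly.aeval, map_zero]
    have h2 : Module.End.IsSemisimple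
        (LinearMap.mulRight k x : Module.End k (Module.End k V)) := by
      apply Module.End.isSemisimple_of_squarefree_aeval_eq_zero hx.minpoly_squarefree
      rw [aux_aeval_mulRight, minpoly.aeval, LinearMap.mulRight_zero_eq_zero]
    exact Module.End.IsSemisimple.sub_of_commute
      (LinearMap.commute_mulLeft_right x x) h1 h2
  have hinvt : (𝔥 : Submodule k (Module.End k V)) ∈ A.invtSubmodule := by
    intro h hh
    simpa [hAapp] using hnorm h hh
  set D : Module.End k (𝔥 : Submodule k (Module.End k V)) := A.restrict hinvt with hD
  have hDss : D.IsSemisimple := hAss.restrict hinvt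
  have hDtop : ⨆ μ, D.eigenspace μ = ⊤ := aux_iSup_eigenspace_eq_top hDss
  have hzero : ∀ μ, D.eigenspace μ ≤ LinearMap.ker D := by
    intro μ v hv
    rw [Module.End.mem_eigenspace_iff] at hv
    rcases eq_or_ne μ 0 with rfl | hμ
    · rw [LinearMap.mem_ker, hv, zero_smul]
    · have hcoe : A (v : Module.End k V) = μ • (v : Module.End k V) := by
        have := congrArg (Subtype.val) hv
        exact this
      have hvz : (v : Module.End k V) = 0 := by
        apply Module.End.eq_zero_of_isNilpotent_isSemisimple _ (hss _ v.2)
        apply aux_isNilpotent (aux_iSup_eigenspace_eq_top hx) hμ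
        rw [← hcoe, hA]
        rfl
      have : v = 0 := Subtype.ext hvz
      rw [LinearMap.mem_ker, this, map_zero]
  have hDzero : D = 0 := by
    have hker : LinearMap.ker D = ⊤ :=
      top_unique (by rw [← hDtop]; exact iSup_le hzero)
    exact LinearMap.ker_eq_top.mp hker
  intro h hh
  have := congrArg Subtype.val (LinearMap.congr_fun hDzero ⟨h, hh⟩)
  rw [← hAapp]; exact this
end

section
/- Let k be an algebraically closed field (of arbitrary characteristic) and V a nonzero finite-dimensional k-vector space. Let 𝔥 be a Lie subalgebra of gl(V) all of whose elements are semisimple endomorphisms. Then 𝔥 is abelian, and there exists a basis of V with respect to which every element of 𝔥 is represented by a diagonal matrix. -/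
open Polynomial Module

open Polynomial Module

lemma lemB {K M : Type*} [Field K] [IsAlgClosed K] [AddCommGroup M] [Module K M]
    [FiniteDimensional K M] {f : Module.End K M} (hf : f.IsSemisimple)
    (h0 : ∀ μ : K, f.HasEigenvalue μ → μ = 0) : f = 0 := by
  set P := minpoly K f with hP
  have hint : IsIntegral K f := Algebra.IsIntegral.isIntegral f
  have hmonic : P.Monic := minpoly.monic hint
  have hsplits : P.Splits := IsAlgClosed.splits P
  have hprod : P = (P.roots.map fun a => X - C a).prod :=
    hsplits.eq_prod_roots_of_monic hmonic
  have hroots : ∀ a ∈ P.roots, a = 0 := by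
    intro a ha
    exact h0 a (Module.End.hasEigenvalue_of_isRoot (isRoot_of_mem_roots ha))
  have hPpow : P = X ^ Multiset.card P.roots := by
    nth_rewrite 1 [hprod]
    have : P.roots.map (fun a => X - C a) = P.roots.map (fun _ => (X : K[X])) :=
      Multiset.map_congr rfl fun a ha => by rw [hroots a ha]; simp
    rw [this, Multiset.map_const', Multiset.prod_replicate]
  have hnil : IsNilpotent f := by
    refine ⟨Multiset.card P.roots, ?_⟩
    have := minpoly.aeval K f
    rw [← hP, hPpow] at this
    simpa using this
  exact Module.End.eq_zero_of_isNilpotent_isSemisimple hnil hf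


lemma lemA {K V : Type*} [Field K] [IsAlgClosed K] [AddCommGroup V] [Module K V]
    [FiniteDimensional K V] {x y : Module.End K V} (hx : x.IsSemisimple)
    (hy : y.IsSemisimple) {α : K} (hα : α ≠ 0) (hxy : x * y - y * x = α • y) : y = 0 := by
  by_contra hy0
  -- nonzero eigenvalue of y
  obtain ⟨μ, hμeig, hμ0⟩ : ∃ μ : K, y.HasEigenvalue μ ∧ μ ≠ 0 := by
    by_contra hc
    push_neg at hc
    exact hy0 (lemB hy hc)
  obtain ⟨v, hv⟩ := hμeig.exists_hasEigenvector
  have hv0 : v ≠ 0 := hv.2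
  have hyv : y v = μ • v := hv.apply_eq_smul
  have hyx : y * x = x * y - α • y := by rw [← hxy, sub_sub_cancel]
  -- commutation relation with powers of y
  have hr : ∀ n : ℕ, y ^ n * x = x * y ^ n - ((n : K) * α) • y ^ n := by
    intro n; induction n with
    | zero => simp
    | succ n ih =>
      calc y ^ (n+1) * x = y ^ n * (y * x) := by rw [pow_succ, mul_assoc]
        _ = y ^ n * (x * y) - α • (y ^ n * y) := by rw [hyx, mul_sub, mul_smul_comm]
        _ = (y ^ n * x) * y - α • y ^ (n+1) := by rw [mul_assoc, pow_succ]
        _ = (x * y ^ n) * y - ((n : K) * α) • (y ^ n * y) - α • y ^ (n+1) := by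
            rw [ih, sub_mul, smul_mul_assoc]
        _ = x * y ^ (n+1) - ((n : K) * α) • y ^ (n+1) - α • y ^ (n+1) := by
            rw [mul_assoc, ← pow_succ]
        _ = x * y ^ (n+1) - (((n : K) + 1) * α) • y ^ (n+1) := by
            rw [add_mul, one_mul, add_smul, sub_sub]
        _ = x * y ^ (n+1) - (((n+1 : ℕ) : K) * α) • y ^ (n+1) := by norm_num
  -- x-eigenvector shifting
  have hshift : ∀ (n : ℕ) (c : K) (u : V), x u = c • u →
      x ((y ^ n) u) = (c + (n : K) * α) • ((y ^ n) u) := by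
    intro n c u hu
    have h1 := congrArg (fun g : Module.End K V => g u) (hr n)
    simp only [Module.End.mul_apply, LinearMap.sub_apply, LinearMap.smul_apply] at h1
    rw [hu, map_smul] at h1
    rw [add_smul]
    exact sub_eq_iff_eq_add.mp h1.symm
  -- powers on the eigenvector
  have hpowv : ∀ n : ℕ, (y ^ n) v = μ ^ n • v := by
    intro n; induction n with
    | zero => simp
    | succ n ih =>
      rw [pow_succ, Module.End.mul_apply, hyv, map_smul, ih, smul_smul, pow_succ, mul_comm]
  -- x is diagonalizable
  have hsupx : ⨆ c : K, x.eigenspace c = ⊤ := by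
    have h1 := Module.End.iSup_maxGenEigenspace_eq_top x
    simp only [(hx.isFinitelySemisimple).maxGenEigenspace_eq_eigenspace] at h1
    exact h1
  -- for each n there is an x-eigenvector not killed by y^n
  have hexist : ∀ n : ℕ, ∃ c : K, ∃ u : V, x u = c • u ∧ (y ^ n) u ≠ 0 := by
    intro n
    by_contra hcon
    push_neg at hcon
    have hker : ∀ c : K, x.eigenspace c ≤ LinearMap.ker (y ^ n) := fun c u hu =>
      LinearMap.mem_ker.mpr (hcon c u (Module.End.mem_eigenspace_iff.mp hu))
    have htop : (⊤ : Submodule K V) ≤ LinearMap.ker (y ^ n) := hsupx ▸ iSup_le hker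
    have h2 : (y ^ n) v = 0 := htop Submodule.mem_top
    rw [hpowv n] at h2
    exact hv0 ((smul_eq_zero.mp h2).resolve_left (pow_ne_zero n hμ0))
  -- pigeonhole on eigenvalues of x
  have hTfin : {c : K | x.HasEigenvalue c}.Finite :=
    Set.Finite.subset (finite_setOf_isRoot (minpoly.ne_zero (Algebra.IsIntegral.isIntegral x)))
      (fun c hc => Module.End.isRoot_of_hasEigenvalue hc)
  choose c u hcu hyu using hexist
  have hmem1 : ∀ n : ℕ, x.HasEigenvalue (c n) := fun n =>
    Module.End.hasEigenvalue_of_hasEigenvector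
      ⟨Module.End.mem_eigenspace_iff.mpr (hcu n), fun h => hyu n (by rw [h]; simp)⟩
  have hmem2 : ∀ n : ℕ, x.HasEigenvalue (c n + (n : K) * α) := fun n =>
    Module.End.hasEigenvalue_of_hasEigenvector
      ⟨Module.End.mem_eigenspace_iff.mpr (hshift n (c n) (u n) (hcu n)), hyu n⟩
  obtain ⟨d, hd0, hdK⟩ : ∃ d : ℕ, d ≠ 0 ∧ ((d : K)) = 0 := by
    have hmt : Set.MapsTo (fun n : ℕ => ((c n, c n + (n : K) * α) : K × K)) Set.univ
        ({c : K | x.HasEigenvalue c} ×ˢ {c : K | x.HasEigenvalue c}) := fun n _ =>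
      Set.mk_mem_prod (hmem1 n) (hmem2 n)
    obtain ⟨m, -, n, -, hmn, heq⟩ :=
      Set.infinite_univ.exists_ne_map_eq_of_mapsTo hmt (hTfin.prod hTfin)
    have h1 : c m = c n := congrArg Prod.fst heq
    have h2 : c m + (m : K) * α = c n + (n : K) * α := congrArg Prod.snd heq
    rw [h1] at h2
    have h3 : (m : K) = (n : K) := mul_right_cancel₀ hα (add_left_cancel h2)
    rcases Nat.lt_or_gt_of_ne hmn with hlt | hlt
    · exact ⟨n - m, Nat.sub_ne_zero_of_lt hlt, by rw [Nat.cast_sub hlt.le, ← h3, sub_self]⟩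
    · exact ⟨m - n, Nat.sub_ne_zero_of_lt hlt, by rw [Nat.cast_sub hlt.le, h3, sub_self]⟩
  -- the characteristic is a prime p
  set p := ringChar K with hpdef
  have hpd : p ∣ d := (CharP.cast_eq_zero_iff K p d).mp hdK
  have hp0 : p ≠ 0 := fun h => hd0 (by simpa [h, zero_dvd_iff] using hpd)
  have hpprime : p.Prime := (CharP.char_is_prime_or_zero K p).resolve_right hp0
  have hpK : (p : K) = 0 := CharP.cast_eq_zero K p
  haveI : Fact p.Prime := ⟨hpprime⟩
  -- the cyclic subspace W
  set s : Module.End K V := x - algebraMap K (Module.End K V) α with hs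
  have hsemi : SemiconjBy y x s := by
    show y * x = s * y
    rw [hs, sub_mul, ← Algebra.smul_def, hyx]
  have haev : ∀ q : K[X], y * (aeval x q) = (aeval s q) * y := by
    intro q
    induction q using Polynomial.induction_on' with
    | add p q hp hq => rw [map_add, map_add, mul_add, add_mul, hp, hq]
    | monomial n a =>
      rw [aeval_monomial, aeval_monomial]
      have h1 : y * x ^ n = s ^ n * y := hsemi.pow_right n
      calc y * (algebraMap K _ a * x ^ n) = algebraMap K _ a * (y * x ^ n) := by
            rw [← mul_assoc, ← Algebra.commutes, mul_assoc]
        _ = algebraMap K _ a * (s ^ n * y) := by rw [h1]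
        _ = (algebraMap K _ a * s ^ n) * y := by rw [mul_assoc]
  have hcompeq : ∀ q : K[X], aeval s q = aeval x (q.comp (X - C α)) := by
    intro q
    rw [aeval_comp]
    congr 1
    simp [hs]
  set W : Submodule K V := Submodule.span K (Set.range fun q : K[X] => (aeval x q) v) with hWdef
  have hgen : ∀ q : K[X], (aeval x q) v ∈ W := fun q => Submodule.subset_span ⟨q, rfl⟩
  have hvW : v ∈ W := by simpa using hgen 1
  have hxvW : x v ∈ W := by simpa using hgen X
  have hyWgen : ∀ q : K[X], y ((aeval x q) v) = μ • (aeval x (q.comp (X - C α))) v := by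
    intro q
    have h1 := congrArg (fun g : Module.End K V => g v) (haev q)
    simp only [Module.End.mul_apply] at h1
    rw [h1, hyv, map_smul, hcompeq]
  have hyW : ∀ w ∈ W, y w ∈ W := by
    intro w hw
    induction hw using Submodule.span_induction with
    | mem w hw => obtain ⟨q, rfl⟩ := hw; rw [hyWgen]; exact W.smul_mem _ (hgen _)
    | zero => simp
    | add _ _ _ _ ih1 ih2 => rw [map_add]; exact W.add_mem ih1 ih2
    | smul a _ _ ih1 => rw [map_smul]; exact W.smul_mem _ ih1
  have hcommp : Commute x (y ^ p) := by
    have h1 := hr p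
    rw [hpK, zero_mul, zero_smul, sub_zero] at h1
    exact h1.symm
  have hpol : ∀ q : K[X], Commute (aeval x q) (y ^ p) := by
    intro q
    induction q using Polynomial.induction_on' with
    | add p q ih1 ih2 => rw [map_add]; exact ih1.add_left ih2
    | monomial n a =>
      rw [aeval_monomial]
      exact (Algebra.commute_algebraMap_left a (y ^ p)).mul_left (hcommp.pow_left n)
  have hyppow : ∀ w ∈ W, (y ^ p) w = μ ^ p • w := by
    intro w hw
    induction hw using Submodule.span_induction with
    | mem w hw =>
      obtain ⟨q, rfl⟩ := hw
      have h1 := congrArg (fun g : Module.End K V => g v) (hpol q)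
      simp only [Module.End.mul_apply] at h1
      rw [← h1, hpowv p, map_smul]
    | zero => simp
    | add _ _ _ _ ih1 ih2 => rw [map_add, ih1, ih2, smul_add]
    | smul a _ _ ih1 => rw [map_smul, ih1, smul_comm]
  have hWy : W ∈ y.invtSubmodule := (Module.End.mem_invtSubmodule y).mpr
    (fun w hw => Submodule.mem_comap.mpr (hyW w hw))
  haveI : Nontrivial (↥W) := ⟨⟨⟨v, hvW⟩, 0, fun h => hv0 (by simpa using congrArg Subtype.val h)⟩⟩
  haveI : CharP (Module.End K ↥W) p :=
    charP_of_injective_algebraMap (algebraMap K (Module.End K ↥W)).injective p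
  set yW : Module.End K ↥W := y.restrict hWy with hyWdef
  have hyWp : yW ^ p = algebraMap K (Module.End K ↥W) (μ ^ p) := by
    apply LinearMap.ext
    rintro ⟨w, hw⟩
    apply Subtype.ext
    have hL : (((yW ^ p) ⟨w, hw⟩ : ↥W) : V) = μ ^ p • w := by
      rw [hyWdef]
      erw [Module.End.pow_restrict p hyW]
      exact hyppow w hw
    have hR : ((((algebraMap K (Module.End K ↥W)) (μ ^ p)) ⟨w, hw⟩ : ↥W) : V) = μ ^ p • w := by
      rw [Module.algebraMap_end_apply]
      rfl
    exact hL.trans hR.symm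
  set z : Module.End K ↥W := yW - algebraMap K (Module.End K ↥W) μ with hzdef
  have hzss : z.IsSemisimple := Module.End.isSemisimple_sub_algebraMap_iff.mpr (hy.restrict hWy)
  have hznil : z ^ p = 0 := by
    rw [hzdef, sub_pow_char_of_commute _ ((Algebra.commutes μ yW).symm), hyWp, ← map_pow, sub_self]
  have hz0 : z = 0 := Module.End.eq_zero_of_isNilpotent_isSemisimple ⟨p, hznil⟩ hzss
  have hyeqW : yW = algebraMap K (Module.End K ↥W) μ := by rwa [hzdef, sub_eq_zero] at hz0
  -- contradiction
  have hyxv : y (x v) = μ • (x v) := by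
    have h1 := congrArg (fun g : Module.End K ↥W => g ⟨x v, hxvW⟩) hyeqW
    have h2 := congrArg Subtype.val h1
    have h3 : ((yW ⟨x v, hxvW⟩ : ↥W) : V) = μ • x v := by
      simpa [Module.algebraMap_end_apply] using h2
    exact h3
  have hyxv2 : y (x v) = μ • (x v) - (α * μ) • v := by
    have h1 := congrArg (fun g : Module.End K V => g v) hyx
    simp only [Module.End.mul_apply, LinearMap.sub_apply, LinearMap.smul_apply] at h1
    rw [h1, hyv, map_smul, smul_smul]
  rw [hyxv] at hyxv2
  have h4 : (α * μ) • v = 0 := sub_eq_self.mp hyxv2.symm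
  exact absurd ((smul_eq_zero.mp h4).resolve_right hv0) (mul_ne_zero hα hμ0)

private lemma aeval_mulRight {K A : Type*} [Field K] [Ring A] [Algebra K A] (a : A)
    (q : Polynomial K) :
    Polynomial.aeval (LinearMap.mulRight K a) q = LinearMap.mulRight K (Polynomial.aeval a q) := by
  induction q using Polynomial.induction_on' with
  | add p q ih1 ih2 => rw [map_add, map_add, ih1, ih2]; ext f; simp [mul_add]
  | monomial n c =>
    rw [Polynomial.aeval_monomial, Polynomial.aeval_monomial, LinearMap.pow_mulRight]
    ext f
    simp only [Module.End.mul_apply, LinearMap.mulRight_apply, Module.algebraMap_end_apply,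
      LinearMap.smul_apply]
    rw [Algebra.smul_def, ← mul_assoc, Algebra.commutes c, mul_assoc]

private lemma aeval_mulLeft {K A : Type*} [Field K] [Ring A] [Algebra K A] (a : A)
    (q : Polynomial K) :
    Polynomial.aeval (LinearMap.mulLeft K a) q = LinearMap.mulLeft K (Polynomial.aeval a q) := by
  induction q using Polynomial.induction_on' with
  | add p q ih1 ih2 => rw [map_add, map_add, ih1, ih2]; ext f; simp [add_mul]
  | monomial n c =>
    rw [Polynomial.aeval_monomial, Polynomial.aeval_monomial, LinearMap.pow_mulLeft]
    ext f
    simp only [Module.End.mul_apply, LinearMap.mulLeft_apply, Module.algebraMap_end_apply,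
      LinearMap.smul_apply]
    rw [Algebra.smul_def, mul_assoc]

attribute [local instance 100] LieRing.ofAssociativeRing

/-- Let `k` be an algebraically closed field (of arbitrary characteristic) and `V` a nonzero
finite-dimensional `k`-vector space.  If `𝔥` is a Lie subalgebra of `gl(V)` all of whose
elements are semisimple endomorphisms, then `𝔥` is abelian and there is a basis of `V`
simultaneously diagonalising every element of `𝔥`. -/
theorem stmt3 (k V : Type*) [Field k] [IsAlgClosed k]
    [AddCommGroup V] [Module k V] [FiniteDimensional k V] [Nontrivial V]
    (𝔥 : LieSubalgebra k (Module.End k V))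
    (hss : ∀ h ∈ 𝔥, Module.End.IsSemisimple h) :
    (∀ a ∈ 𝔥, ∀ b ∈ 𝔥, ⁅a, b⁆ = 0) ∧
    ∃ b : Module.Basis (Fin (Module.finrank k V)) k V,
      ∀ h ∈ 𝔥, ∀ i, ∃ c : k, h (b i) = c • b i := by
  have habel : ∀ a ∈ 𝔥, ∀ b ∈ 𝔥, ⁅a, b⁆ = 0 := by
    intro a ha
    set A : Module.End k (Module.End k V) :=
      LinearMap.mulLeft k a - LinearMap.mulRight k a with hA
    have hLss : Module.End.IsSemisimple (LinearMap.mulLeft k a) := by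
      apply Module.End.isSemisimple_of_squarefree_aeval_eq_zero (hss a ha).minpoly_squarefree
      rw [aeval_mulLeft, minpoly.aeval]
      ext f
      simp
    have hRss : Module.End.IsSemisimple (LinearMap.mulRight k a) := by
      apply Module.End.isSemisimple_of_squarefree_aeval_eq_zero (hss a ha).minpoly_squarefree
      rw [aeval_mulRight, minpoly.aeval]
      ext f
      simp
    have hAss : Module.End.IsSemisimple A :=
      Module.End.IsSemisimple.sub_of_commute (LinearMap.commute_mulLeft_right a a) hLss hRss
    have hinv : 𝔥.toSubmodule ∈ A.invtSubmodule := by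
      rw [Module.End.mem_invtSubmodule]
      intro b hb
      rw [Submodule.mem_comap]
      have h1 : A b = ⁅a, b⁆ := by
        rw [hA, Ring.lie_def]
        simp
      show A b ∈ 𝔥.toSubmodule
      rw [h1]
      exact 𝔥.lie_mem ha hb
    have hA'ss : Module.End.IsSemisimple (A.restrict hinv) := hAss.restrict hinv
    have hzero : A.restrict hinv = 0 := by
      apply lemB hA'ss
      intro ν hν
      by_contra hν0
      obtain ⟨⟨b, hb⟩, hbv⟩ := hν.exists_hasEigenvector
      have hb0 : b ≠ 0 := fun h => hbv.2 (Subtype.ext h)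
      have happ : A b = ν • b := by
        have h1 := congrArg Subtype.val hbv.apply_eq_smul
        have h2 : ((A.restrict hinv ⟨b, hb⟩ : ↥𝔥.toSubmodule) : Module.End k V) = ν • b := by
          simpa using h1
        exact h2
      have heq : a * b - b * a = ν • b := by
        rw [hA] at happ
        simpa using happ
      exact hb0 (lemA (hss a ha) (hss b hb) hν0 heq)
    intro b hb
    have h1 := congrArg (fun g : Module.End k ↥𝔥.toSubmodule => g ⟨b, hb⟩) hzero
    have h2 := congrArg Subtype.val h1
    have h3 : A b = 0 := h2
    rw [Ring.lie_def, ← h3, hA]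
    simp
  refine ⟨habel, ?_⟩
  classical
  -- simultaneous diagonalisation
  set f : ↥𝔥 → Module.End k V := fun i => (i : Module.End k V) with hf
  have hcomm : ∀ i j : ↥𝔥, Commute (f i) (f j) := by
    intro i j
    have h1 := habel i.1 i.2 j.1 j.2
    rw [Ring.lie_def, sub_eq_zero] at h1
    exact h1
  have hmapsTo : ∀ i j (φ : k), Set.MapsTo (f i) ((f j).maxGenEigenspace φ)
      ((f j).maxGenEigenspace φ) := fun i j φ =>
    Module.End.mapsTo_maxGenEigenspace_of_comm (hcomm j i) φ
  have hsup : ⨆ χ : ↥𝔥 → k, ⨅ i, (f i).maxGenEigenspace (χ i) = ⊤ :=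
    Module.End.iSup_iInf_maxGenEigenspace_eq_top_of_iSup_maxGenEigenspace_eq_top_of_commute f
      (fun i j _ => hcomm i j) (fun i => Module.End.iSup_maxGenEigenspace_eq_top (f i))
  have hindep := Module.End.independent_iInf_maxGenEigenspace_of_forall_mapsTo f hmapsTo
  have hInternal := DirectSum.isInternal_submodule_of_iSupIndep_of_iSup_eq_top hindep hsup
  set bases : ∀ χ : ↥𝔥 → k, Basis
      (Fin (Module.finrank k ↥(⨅ i, (f i).maxGenEigenspace (χ i)))) k
      ↥(⨅ i, (f i).maxGenEigenspace (χ i)) := fun χ => Module.finBasis k _ with hbases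
  set cb := hInternal.collectedBasis bases with hcb
  set e := cb.indexEquiv (Module.finBasis k V) with he
  refine ⟨cb.reindex e, ?_⟩
  intro h hmem i
  rw [Module.Basis.reindex_apply]
  obtain ⟨χ, j⟩ := e.symm i
  have hmem' : cb ⟨χ, j⟩ ∈ ⨅ i, (f i).maxGenEigenspace (χ i) :=
    hInternal.collectedBasis_mem bases ⟨χ, j⟩
  have hmem2 : cb ⟨χ, j⟩ ∈ (f ⟨h, hmem⟩).maxGenEigenspace (χ ⟨h, hmem⟩) := by
    exact (Submodule.mem_iInf _).mp hmem' ⟨h, hmem⟩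
  rw [(hss h hmem).isFinitelySemisimple.maxGenEigenspace_eq_eigenspace] at hmem2
  exact ⟨χ ⟨h, hmem⟩, Module.End.mem_eigenspace_iff.mp hmem2⟩
end

section
/- Let k be an algebraically closed field of characteristic 0, V a finite-dimensional k-vector space, and 𝔥 a finite-dimensional Lie subalgebra of gl(V). If every element of the solvable radical rad(𝔥) of 𝔥 is a semisimple endomorphism of V, then rad(𝔥) equals the centre z(𝔥) of 𝔥. -/
section Aux

open Polynomial LinearMap Module

variable {k V : Type*} [Field k] [AddCommGroup V] [Module k V] [FiniteDimensional k V]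

lemma aeval_mulRight_s9 (x : Module.End k V) (p : k[X]) :
    aeval (LinearMap.mulRight k x) p = LinearMap.mulRight k (aeval x p) := by
  induction p using Polynomial.induction_on' with
  | add p q hp hq =>
      ext z
      simp [hp, hq, mul_add]
  | monomial n c =>
      ext z
      simp [aeval_monomial, LinearMap.pow_mulRight, Algebra.algebraMap_eq_smul_one, mul_smul_comm,
        mul_assoc]

lemma aeval_mulLeft_s9 (x : Module.End k V) (p : k[X]) :
    aeval (LinearMap.mulLeft k x) p = LinearMap.mulLeft k (aeval x p) := by
  induction p using Polynomial.induction_on' with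
  | add p q hp hq =>
      ext z
      simp [hp, hq, add_mul]
  | monomial n c =>
      ext z
      simp [aeval_monomial, LinearMap.pow_mulLeft, Algebra.algebraMap_eq_smul_one, smul_mul_assoc,
        mul_assoc]

lemma isSemisimple_ad {x : Module.End k V} (hx : x.IsSemisimple) [PerfectField k] :
    Module.End.IsSemisimple (LinearMap.mulLeft k x - LinearMap.mulRight k x : Module.End k (Module.End k V)) := by
  have hL : Module.End.IsSemisimple (LinearMap.mulLeft k x : Module.End k (Module.End k V)) := by
    apply Module.End.isSemisimple_of_squarefree_aeval_eq_zero hx.minpoly_squarefree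
    rw [aeval_mulLeft_s9, minpoly.aeval]
    ext z; simp
  have hR : Module.End.IsSemisimple (LinearMap.mulRight k x : Module.End k (Module.End k V)) := by
    apply Module.End.isSemisimple_of_squarefree_aeval_eq_zero hx.minpoly_squarefree
    rw [aeval_mulRight_s9, minpoly.aeval]
    ext z; simp
  exact Module.End.IsSemisimple.sub_of_commute (LinearMap.commute_mulLeft_right x x) hL hR

lemma eq_zero_of_bracket_smul [IsAlgClosed k] [CharZero k] {x y : Module.End k V}
    (hx : x.IsSemisimple) (hy : y.IsSemisimple) {c : k} (hc : c ≠ 0)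
    (h : x * y - y * x = c • y) : y = 0 := by
  have h' : ∀ w : V, x (y w) = y (x w) + c • y w := by
    intro w
    have h2 : (x * y) w = (y * x) w + (c • y) w := by
      rw [sub_eq_iff_eq_add] at h
      rw [h]; simp [add_comm]
    simpa [Module.End.mul_apply] using h2
  -- shifting of eigenspaces
  have key : ∀ (n : ℕ) (μ : k) (v : V), v ∈ x.eigenspace μ →
      (y ^ n) v ∈ x.eigenspace (μ + n • c) := by
    intro n
    induction n with
    | zero => intro μ v hv; simpa using hv
    | succ n ih =>
        intro μ v hv
        have hw := ih μ v hv
        rw [Module.End.mem_eigenspace_iff] at hw ⊢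
        have heq : (y ^ (n+1)) v = y ((y ^ n) v) := by
          rw [pow_succ', Module.End.mul_apply]
        rw [heq, h' ((y ^ n) v), hw, map_smul, ← add_smul]
        congr 1
        push_cast [nsmul_eq_mul]
        ring
  -- every eigenvector of x is killed by a power of y
  have key2 : ∀ (μ : k) (v : V), v ∈ x.eigenspace μ → ∃ n, (y ^ n) v = 0 := by
    intro μ v hv
    by_contra hcon
    push_neg at hcon
    have hμinj : Function.Injective (fun n : ℕ => μ + n • c) := by
      intro a b hab
      simp only [nsmul_eq_mul, add_right_inj] at hab
      have : (a : k) = b := by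
        have := mul_right_cancel₀ hc hab
        exact_mod_cast this
      exact_mod_cast this
    have : LinearIndependent k (fun n : ℕ => (y ^ n) v) :=
      x.eigenvectors_linearIndependent' (fun n : ℕ => μ + n • c) hμinj _
        (fun n => ⟨key n μ v hv, hcon n⟩)
    exact Module.Finite.not_linearIndependent_of_infinite _ this
  -- hence y is nilpotent
  have hnil : IsNilpotent y := by
    rw [LinearMap.isNilpotent_iff_charpoly, LinearMap.charpoly_eq_X_pow_iff]
    intro v
    have hv : v ∈ ⨆ μ : k, x.eigenspace μ := by
      have htop := Module.End.iSup_maxGenEigenspace_eq_top x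
      simp_rw [hx.isFinitelySemisimple.maxGenEigenspace_eq_eigenspace] at htop
      rw [htop]; trivial
    induction hv using Submodule.iSup_induction' with
    | mem μ v hv => exact key2 μ v hv
    | zero => exact ⟨0, by simp⟩
    | add v w _ _ hv hw =>
        obtain ⟨n, hn⟩ := hv
        obtain ⟨m, hm⟩ := hw
        refine ⟨n + m, ?_⟩
        have h1 : (y ^ (n + m)) v = 0 := by
          rw [add_comm, pow_add, Module.End.mul_apply, hn, map_zero]
        have h2 : (y ^ (n + m)) w = 0 := by
          rw [pow_add, Module.End.mul_apply, hm, map_zero]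
        rw [map_add, h1, h2, add_zero]
  exact Module.End.eq_zero_of_isNilpotent_isSemisimple hnil hy

end Aux


attribute [local instance] LieRing.ofAssociativeRing

/-- Let `k` be an algebraically closed field of characteristic `0`, `V` a
finite-dimensional `k`-vector space and `𝔥` a Lie subalgebra of `gl(V)`.  If every
element of the solvable radical of `𝔥` is a semisimple endomorphism of `V`, then the
radical of `𝔥` equals the centre of `𝔥`. -/
theorem stmt9 (k V : Type*) [Field k] [IsAlgClosed k] [CharZero k]
    [AddCommGroup V] [Module k V] [FiniteDimensional k V]
    (𝔥 : LieSubalgebra k (Module.End k V))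
    (hrad : ∀ x : 𝔥, x ∈ LieAlgebra.radical k 𝔥 →
      Module.End.IsSemisimple (x : Module.End k V)) :
    LieAlgebra.radical k 𝔥 = LieAlgebra.center k 𝔥 := by
  refine le_antisymm ?_ (LieAlgebra.center_le_radical k 𝔥)
  intro x hx
  rw [LieAlgebra.center, LieModule.mem_maxTrivSubmodule]
  have hxss : Module.End.IsSemisimple (x : Module.End k V) := hrad x hx
  -- the adjoint action of x on End k V
  set D : Module.End k (Module.End k V) :=
    LinearMap.mulLeft k (x : Module.End k V) - LinearMap.mulRight k (x : Module.End k V) with hDdef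
  have hD : D.IsSemisimple := isSemisimple_ad hxss
  have hDapply : ∀ z : Module.End k V, D z = (x : Module.End k V) * z - z * (x : Module.End k V) := by
    intro z; simp [hDdef]
  -- 𝔥 is invariant under D
  set p : Submodule k (Module.End k V) := 𝔥.toSubmodule with hpdef
  have hp : p ∈ D.invtSubmodule := by
    intro z hz
    have hz' : z ∈ 𝔥 := hz
    simp only [Submodule.mem_comap, hDapply]
    have : ⁅(x : Module.End k V), z⁆ ∈ 𝔥 := 𝔥.lie_mem x.2 hz'
    rwa [Ring.lie_def] at this
  set A : Module.End k p := D.restrict hp with hAdef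
  have hA : A.IsSemisimple := hD.restrict hp
  -- every eigenvalue of A is zero
  have heig : ∀ μ : k, μ ≠ 0 → A.eigenspace μ = ⊥ := by
    intro μ hμ
    rw [eq_bot_iff]
    intro v hv
    rw [Module.End.mem_eigenspace_iff] at hv
    have hv1 : D v.1 = μ • v.1 := congrArg Subtype.val hv
    -- package v as an element of 𝔥
    set y : 𝔥 := ⟨v.1, v.2⟩ with hydef
    have hbracket : ⁅x, y⁆ = (μ : k) • y := by
      apply Subtype.ext
      have : (↑(⁅x, y⁆ : 𝔥) : Module.End k V) = ⁅(x : Module.End k V), (y : Module.End k V)⁆ := rfl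
      rw [this, Ring.lie_def]
      rw [hDapply] at hv1
      exact hv1
    have hymem : y ∈ LieAlgebra.radical k 𝔥 := by
      have h1 : ⁅x, y⁆ ∈ LieAlgebra.radical k 𝔥 := by
        have := (LieAlgebra.radical k 𝔥).lie_mem (x := y) hx
        rw [← lie_skew]
        exact neg_mem this
      have h2 : (μ : k) • y ∈ LieAlgebra.radical k 𝔥 := hbracket ▸ h1
      have := (LieAlgebra.radical k 𝔥).smul_mem μ⁻¹ h2
      rwa [smul_smul, inv_mul_cancel₀ hμ, one_smul] at this
    have hyss : Module.End.IsSemisimple (y : Module.End k V) := hrad y hymem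
    have hrel : (x : Module.End k V) * (y : Module.End k V)
        - (y : Module.End k V) * (x : Module.End k V) = μ • (y : Module.End k V) := by
      rw [hDapply] at hv1; exact hv1
    have hy0 : (y : Module.End k V) = 0 := eq_zero_of_bracket_smul hxss hyss hμ hrel
    have : v = 0 := Subtype.ext hy0
    simp [this]
  -- hence A = 0
  have hAzero : A = 0 := by
    have htop := Module.End.iSup_maxGenEigenspace_eq_top A
    simp_rw [hA.isFinitelySemisimple.maxGenEigenspace_eq_eigenspace] at htop
    have hle : ∀ μ : k, A.eigenspace μ ≤ A.eigenspace 0 := by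
      intro μ
      rcases eq_or_ne μ 0 with rfl | hμ
      · exact le_rfl
      · rw [heig μ hμ]; exact bot_le
    have : A.eigenspace 0 = ⊤ := by
      rw [eq_top_iff, ← htop]
      exact iSup_le hle
    rw [Module.End.eigenspace_zero] at this
    exact LinearMap.ker_eq_top.mp this
  -- conclude
  intro y
  apply Subtype.ext
  have h0 : D (y : Module.End k V) = 0 := by
    have := congrArg Subtype.val (LinearMap.congr_fun hAzero ⟨(y : Module.End k V), y.2⟩)
    exact this
  rw [hDapply] at h0
  have : (↑(⁅y, x⁆ : 𝔥) : Module.End k V) = ⁅(y : Module.End k V), (x : Module.End k V)⁆ := rfl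
  rw [sub_eq_zero] at h0
  rw [this, Ring.lie_def, ← h0]
  simp
end
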